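/- Let u be C¹ near 0 with ∇_ℍ u(0) ≠ 0, and for small ε>0 let P_ε=(x_ε,y_ε,t_ε) be a point of maximum of u on the closed gauge ball B̄(0,ε). Then (x_ε,y_ε)/ε → ∇_ℍ u(0)/|∇_ℍ u(0)| as ε→0. -/

import Mathlib

open MeasureTheory Filter Topology

noncomputable section

/-- Points of the Heisenberg group `ℍⁿ = ℝⁿ × ℝⁿ × ℝ`. -/
abbrev Heis (n : ℕ) := (Fin n → ℝ) × (Fin n → ℝ) × ℝ

/-- Heisenberg group product. -/
def hMul {n : ℕ} (P Q : Heis n) : Heis n :=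
  (P.1 + Q.1, P.2.1 + Q.2.1,
    P.2.2 + Q.2.2 + 2 * ((∑ i, Q.1 i * P.2.1 i) - ∑ i, P.1 i * Q.2.1 i))

/-- Group inverse. -/
def hInv {n : ℕ} (P : Heis n) : Heis n := (-P.1, -P.2.1, -P.2.2)

/-- Group identity. -/
def hOne {n : ℕ} : Heis n := (0, 0, 0)

/-- Anisotropic dilation `δ_r(x,y,t) = (rx, ry, r²t)`. -/
def hDil {n : ℕ} (r : ℝ) (P : Heis n) : Heis n := (r • P.1, r • P.2.1, r ^ 2 * P.2.2)

/-- Homogeneous gauge `‖(x,y,t)‖ = ((|x|²+|y|²)² + t²)^{1/4}`. -/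
def hGauge {n : ℕ} (P : Heis n) : ℝ :=
  (((∑ i, (P.1 i) ^ 2) + ∑ i, (P.2.1 i) ^ 2) ^ 2 + (P.2.2) ^ 2) ^ ((1 : ℝ) / 4)

/-- Gauge ball of radius `ε` centred at `P`. -/
def hBall {n : ℕ} (P : Heis n) (ε : ℝ) : Set (Heis n) :=
  {Q | hGauge (hMul (hInv P) Q) < ε}

/-- Closed gauge ball of radius `ε` centred at `P`. -/
def hClosedBall {n : ℕ} (P : Heis n) (ε : ℝ) : Set (Heis n) :=
  {Q | hGauge (hMul (hInv P) Q) ≤ ε}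

/-- Horizontal derivative `X_i u = ∂_{x_i} u + 2 y_i ∂_t u`. -/
def Xd {n : ℕ} (i : Fin n) (u : Heis n → ℝ) (P : Heis n) : ℝ :=
  fderiv ℝ u P ((Pi.single i 1 : Fin n → ℝ), (0 : Fin n → ℝ), 2 * P.2.1 i)

/-- Horizontal derivative `Y_i u = ∂_{y_i} u − 2 x_i ∂_t u`. -/
def Yd {n : ℕ} (i : Fin n) (u : Heis n → ℝ) (P : Heis n) : ℝ :=
  fderiv ℝ u P ((0 : Fin n → ℝ), (Pi.single i 1 : Fin n → ℝ), -(2 * P.1 i))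

/-- Vertical derivative `∂_t u`. -/
def Td {n : ℕ} (u : Heis n → ℝ) (P : Heis n) : ℝ :=
  fderiv ℝ u P ((0 : Fin n → ℝ), (0 : Fin n → ℝ), (1 : ℝ))

/-- Norm of the horizontal gradient. -/
def hGradNorm {n : ℕ} (u : Heis n → ℝ) (P : Heis n) : ℝ :=
  Real.sqrt ((∑ i, (Xd i u P) ^ 2) + ∑ i, (Yd i u P) ^ 2)

/-- Horizontal (Kohn) Laplacian `Δ_ℍ u = Σᵢ (X_i² u + Y_i² u)`. -/
def hLap {n : ℕ} (u : Heis n → ℝ) (P : Heis n) : ℝ :=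
  (∑ i, Xd i (Xd i u) P) + ∑ i, Yd i (Yd i u) P

/-- Quadratic form of the (symmetrized) horizontal Hessian evaluated at a horizontal
vector `(v, w)` — the quadratic form of the symmetrized matrix agrees with that of the
raw second-derivative matrix. -/
def hQuad {n : ℕ} (u : Heis n → ℝ) (P : Heis n) (v w : Fin n → ℝ) : ℝ :=
  ∑ i, ∑ j,
    (v i * v j * Xd i (Xd j u) P + v i * w j * Xd i (Yd j u) P +
      w i * v j * Yd i (Xd j u) P + w i * w j * Yd i (Yd j u) P)

/-!
On `B̄(0, ε)` one has `|(x, y)| ≤ ε` and `|t| ≤ ε²`, so the first-order expansion of `u` at `0`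
reads `u(P) = u(0) + ⟪∇_ℍ u(0), (x, y)⟫ + o(ε)`: the vertical term `t ∂_t u(0)` is `O(ε²)`.
Comparing the maximizer with the point `ε ∇_ℍ u(0) / |∇_ℍ u(0)|` of the ball gives
`ε |∇_ℍ u(0)| - ⟪∇_ℍ u(0), (x_ε, y_ε)⟫ = o(ε)`. Finally, if `|z| ≤ 1` and `⟪v, z⟫ → 1` for a
unit vector `v`, then `z → v`, because `|z - v|² ≤ 2 (1 - ⟪v, z⟫)`.
-/

open scoped RealInnerProductSpace
open Asymptotics

lemma tendsto_of_norm_le_one_of_inner_tendsto {E α : Type*} [NormedAddCommGroup E]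
    [InnerProductSpace ℝ E] {l : Filter α} {z : α → E} {g : E} (hg : g ≠ 0)
    (hz : ∀ᶠ a in l, ‖z a‖ ≤ 1) (h : Tendsto (fun a => ⟪g, z a⟫) l (𝓝 ‖g‖)) :
    Tendsto z l (𝓝 (‖g‖⁻¹ • g)) := by
  have hg' : 0 < ‖g‖ := norm_pos_iff.2 hg
  have hv : ‖‖g‖⁻¹ • g‖ = 1 := by rw [norm_smul, norm_inv, norm_norm, inv_mul_cancel₀ hg'.ne']
  have hbound : ∀ᶠ a in l, ‖z a - ‖g‖⁻¹ • g‖ ≤ √(2 * (1 - ‖g‖⁻¹ * ⟪g, z a⟫)) := by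
    filter_upwards [hz] with a ha
    refine Real.le_sqrt_of_sq_le ?_
    rw [norm_sub_sq_real, hv, real_inner_smul_right, real_inner_comm]
    nlinarith [norm_nonneg (z a)]
  have hlim : Tendsto (fun a => √(2 * (1 - ‖g‖⁻¹ * ⟪g, z a⟫))) l (𝓝 0) := by
    have := ((h.const_mul ‖g‖⁻¹).const_sub 1).const_mul 2 |>.sqrt
    rwa [inv_mul_cancel₀ hg'.ne', sub_self, mul_zero, Real.sqrt_zero] at this
  exact tendsto_iff_norm_sub_tendsto_zero.2 <|
    squeeze_zero' (Eventually.of_forall fun _ => norm_nonneg _) hbound hlim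

lemma isLittleO_sub_fderiv_comp {E F : Type*} [NormedAddCommGroup E] [NormedSpace ℝ E]
    [NormedAddCommGroup F] [NormedSpace ℝ F] {f : E → F} (hf : DifferentiableAt ℝ f 0)
    {P : ℝ → E} (hP : ∀ᶠ ε in 𝓝[>] 0, ‖P ε‖ ≤ ε) :
    (fun ε => f (P ε) - f 0 - fderiv ℝ f 0 (P ε)) =o[𝓝[>] 0] id := by
  have hP0 : Tendsto P (𝓝[>] 0) (𝓝 0) :=
    squeeze_zero_norm' hP (tendsto_nhdsWithin_of_tendsto_nhds tendsto_id)
  have hPO : P =O[𝓝[>] 0] id :=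
    IsBigO.of_bound 1 (hP.mono fun ε h => by simpa using h.trans (le_abs_self ε))
  have hf' := hasFDerivAt_iff_isLittleO_nhds_zero.1 hf.hasFDerivAt
  simp only [zero_add] at hf'
  exact (hf'.comp_tendsto hP0).trans_isBigO hPO

lemma tendsto_smul_of_isLittleO {E : Type*} [NormedAddCommGroup E] [InnerProductSpace ℝ E]
    {g : E} (hg : g ≠ 0) {w : ℝ → E} (hw : ∀ᶠ ε in 𝓝[>] 0, ‖w ε‖ ≤ ε)
    (hD : (fun ε => ε * ‖g‖ - ⟪g, w ε⟫) =o[𝓝[>] 0] id) :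
    Tendsto (fun ε => ε⁻¹ • w ε) (𝓝[>] 0) (𝓝 (‖g‖⁻¹ • g)) := by
  refine tendsto_of_norm_le_one_of_inner_tendsto hg ?_ ?_
  · filter_upwards [hw, self_mem_nhdsWithin] with ε hε (hε0 : 0 < ε)
    rw [norm_smul, norm_inv, Real.norm_of_nonneg hε0.le]
    exact inv_mul_le_one_of_le₀ hε hε0.le
  · have h := hD.tendsto_div_nhds_zero.const_sub ‖g‖
    rw [sub_zero] at h
    refine h.congr' ?_
    filter_upwards [self_mem_nhdsWithin] with ε (hε0 : 0 < ε)
    rw [real_inner_smul_right, id, sub_div, mul_div_cancel_left₀ _ hε0.ne']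
    ring

section Heisenberg

variable {n : ℕ}

-- `Heis n` carries the sup norm; its horizontal part `(x, y)` is measured in the Euclidean norm.
def horVec (x y : Fin n → ℝ) : EuclideanSpace ℝ (Fin n ⊕ Fin n) :=
  WithLp.toLp 2 (Sum.elim x y)

def hor (P : Heis n) : EuclideanSpace ℝ (Fin n ⊕ Fin n) := horVec P.1 P.2.1

def hGrad (u : Heis n → ℝ) (P : Heis n) : EuclideanSpace ℝ (Fin n ⊕ Fin n) :=
  horVec (fun i => Xd i u P) (fun i => Yd i u P)

@[simp] lemma horVec_inl (x y : Fin n → ℝ) (i : Fin n) : horVec x y (Sum.inl i) = x i := rfl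

@[simp] lemma horVec_inr (x y : Fin n → ℝ) (i : Fin n) : horVec x y (Sum.inr i) = y i := rfl

lemma norm_horVec_sq (x y : Fin n → ℝ) :
    ‖horVec x y‖ ^ 2 = (∑ i, x i ^ 2) + ∑ i, y i ^ 2 := by
  simp [EuclideanSpace.real_norm_sq_eq, Fintype.sum_sum_type]

lemma inner_horVec (a b x y : Fin n → ℝ) :
    ⟪horVec a b, horVec x y⟫ = (∑ i, a i * x i) + ∑ i, b i * y i := by
  simp [horVec, EuclideanSpace.inner_toLp_toLp, dotProduct, mul_comm]

lemma smul_horVec (c : ℝ) (x y : Fin n → ℝ) : c • horVec x y = horVec (c • x) (c • y) := by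
  ext (i | i) <;> rfl

lemma horVec_ne_zero {x y : Fin n → ℝ} (h : (x, y) ≠ 0) : horVec x y ≠ 0 := by
  contrapose! h
  ext i
  exacts [congrArg (· (Sum.inl i)) h, congrArg (· (Sum.inr i)) h]

lemma hGradNorm_eq_norm_hGrad (u : Heis n → ℝ) (P : Heis n) : hGradNorm u P = ‖hGrad u P‖ := by
  rw [hGradNorm, hGrad, ← norm_horVec_sq, Real.sqrt_sq (norm_nonneg _)]

lemma hMul_hInv_hOne (Q : Heis n) : hMul (hInv hOne) Q = Q := by
  simp [hMul, hInv, hOne]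

lemma mem_hClosedBall_hOne {Q : Heis n} {ε : ℝ} : Q ∈ hClosedBall hOne ε ↔ hGauge Q ≤ ε := by
  change hGauge (hMul (hInv hOne) Q) ≤ ε ↔ _
  rw [hMul_hInv_hOne]

lemma hGauge_nonneg (Q : Heis n) : 0 ≤ hGauge Q := by
  unfold hGauge; positivity

lemma hGauge_eq (Q : Heis n) : hGauge Q = (‖hor Q‖ ^ 4 + Q.2.2 ^ 2) ^ ((1 : ℝ) / 4) := by
  rw [hGauge, hor, ← norm_horVec_sq]; ring_nf

lemma hGauge_pow_four (Q : Heis n) : hGauge Q ^ 4 = ‖hor Q‖ ^ 4 + Q.2.2 ^ 2 := by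
  rw [hGauge_eq, one_div]
  exact_mod_cast Real.rpow_inv_natCast_pow (n := 4) (by positivity) (by norm_num)

lemma hGauge_of_eq_zero {Q : Heis n} (h : Q.2.2 = 0) : hGauge Q = ‖hor Q‖ := by
  rw [hGauge_eq, h, one_div, zero_pow two_ne_zero, add_zero]
  exact_mod_cast Real.pow_rpow_inv_natCast (n := 4) (norm_nonneg _) (by norm_num)

lemma norm_hor_le_hGauge (Q : Heis n) : ‖hor Q‖ ≤ hGauge Q := by
  refine (pow_le_pow_iff_left₀ (norm_nonneg _) (hGauge_nonneg Q) four_ne_zero).mp ?_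
  rw [hGauge_pow_four]
  exact le_add_of_nonneg_right (sq_nonneg _)

lemma abs_le_hGauge_sq (Q : Heis n) : |Q.2.2| ≤ hGauge Q ^ 2 := by
  refine (pow_le_pow_iff_left₀ (abs_nonneg _) (by positivity) two_ne_zero).mp ?_
  rw [sq_abs, ← pow_mul, hGauge_pow_four]
  exact le_add_of_nonneg_left (by positivity)

lemma norm_le_hGauge {Q : Heis n} (h : hGauge Q ≤ 1) : ‖Q‖ ≤ hGauge Q := by
  have hG := hGauge_nonneg Q
  have hhor : ∀ i, ‖hor Q i‖ ≤ hGauge Q := fun i =>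
    (PiLp.norm_apply_le _ i).trans (norm_hor_le_hGauge Q)
  refine max_le ((pi_norm_le_iff_of_nonneg hG).2 fun i => hhor (Sum.inl i)) (max_le
    ((pi_norm_le_iff_of_nonneg hG).2 fun i => hhor (Sum.inr i)) ?_)
  calc ‖Q.2.2‖ ≤ hGauge Q ^ 2 := abs_le_hGauge_sq Q
    _ ≤ hGauge Q := by nlinarith

lemma norm_hor_le_of_mem {Q : Heis n} {ε : ℝ} (hQ : Q ∈ hClosedBall hOne ε) : ‖hor Q‖ ≤ ε :=
  (norm_hor_le_hGauge Q).trans (mem_hClosedBall_hOne.1 hQ)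

lemma norm_le_of_mem {Q : Heis n} {ε : ℝ} (hQ : Q ∈ hClosedBall hOne ε) (hε : ε ≤ 1) : ‖Q‖ ≤ ε :=
  have h := mem_hClosedBall_hOne.1 hQ
  (norm_le_hGauge (h.trans hε)).trans h

lemma Heis.eq_sum_basis (P : Heis n) :
    P = (∑ i, P.1 i • ((Pi.single i 1 : Fin n → ℝ), (0 : Fin n → ℝ), (0 : ℝ))) +
      (∑ i, P.2.1 i • ((0 : Fin n → ℝ), (Pi.single i 1 : Fin n → ℝ), (0 : ℝ))) +
      P.2.2 • ((0 : Fin n → ℝ), (0 : Fin n → ℝ), (1 : ℝ)) := by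
  ext j <;> simp [Prod.fst_sum, Prod.snd_sum, Finset.sum_apply, Pi.single_apply]

lemma fderiv_zero_apply (u : Heis n → ℝ) (P : Heis n) :
    fderiv ℝ u 0 P = ⟪hGrad u 0, hor P⟫ + P.2.2 * Td u 0 := by
  conv_lhs => rw [Heis.eq_sum_basis P]
  simp only [map_add, map_sum, map_smul, smul_eq_mul]
  simp [hGrad, hor, inner_horVec, Xd, Yd, Td, mul_comm]

def steepestPoint (u : Heis n → ℝ) (ε : ℝ) : Heis n :=
  ((ε / ‖hGrad u 0‖) • fun i => Xd i u 0, (ε / ‖hGrad u 0‖) • fun i => Yd i u 0, 0)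

lemma hor_steepestPoint (u : Heis n → ℝ) (ε : ℝ) :
    hor (steepestPoint u ε) = (ε / ‖hGrad u 0‖) • hGrad u 0 :=
  (smul_horVec _ _ _).symm

lemma steepestPoint_mem (u : Heis n → ℝ) {ε : ℝ} (hε : 0 ≤ ε) :
    steepestPoint u ε ∈ hClosedBall hOne ε := by
  rw [mem_hClosedBall_hOne, hGauge_of_eq_zero rfl, hor_steepestPoint, norm_smul, Real.norm_eq_abs,
    abs_div, abs_norm, abs_of_nonneg hε]
  rcases eq_or_ne ‖hGrad u 0‖ 0 with h | h
  · simpa [h] using hε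
  · rw [div_mul_cancel₀ _ h]

lemma fderiv_steepestPoint (u : Heis n → ℝ) (ε : ℝ) :
    fderiv ℝ u 0 (steepestPoint u ε) = ε * ‖hGrad u 0‖ := by
  rw [fderiv_zero_apply, hor_steepestPoint, real_inner_smul_right, real_inner_self_eq_norm_sq]
  change _ + 0 * Td u 0 = _
  rw [zero_mul, add_zero]
  rcases eq_or_ne ‖hGrad u 0‖ 0 with h | h
  · simp [h]
  · field_simp

lemma isLittleO_sub_inner_hor_of_isMaxOn {u : Heis n → ℝ} (hu : DifferentiableAt ℝ u 0)
    {P : ℝ → Heis n}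
    (hP : ∀ᶠ ε in 𝓝[>] 0, P ε ∈ hClosedBall hOne ε ∧ IsMaxOn u (hClosedBall hOne ε) (P ε)) :
    (fun ε => ε * ‖hGrad u 0‖ - ⟪hGrad u 0, hor (P ε)⟫) =o[𝓝[>] 0] id := by
  have hsmall : ∀ᶠ ε in 𝓝[>] (0 : ℝ), ε ∈ Set.Ioo 0 1 := Ioo_mem_nhdsGT one_pos
  have hPnorm : ∀ᶠ ε in 𝓝[>] 0, ‖P ε‖ ≤ ε := by
    filter_upwards [hP, hsmall] with ε hε hε1 using norm_le_of_mem hε.1 hε1.2.le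
  have hQnorm : ∀ᶠ ε in 𝓝[>] 0, ‖steepestPoint u ε‖ ≤ ε := by
    filter_upwards [hsmall] with ε hε using norm_le_of_mem (steepestPoint_mem u hε.1.le) hε.2.le
  have ht : (fun ε => (P ε).2.2 * Td u 0) =o[𝓝[>] 0] id := by
    refine IsBigO.trans_isLittleO (g := fun ε => ε ^ 2) ?_
      ((isLittleO_pow_id one_lt_two).mono nhdsWithin_le_nhds)
    refine IsBigO.of_bound |Td u 0| ?_
    filter_upwards [hP] with ε hε
    simp only [norm_mul, norm_pow, Real.norm_eq_abs, sq_abs]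
    rw [mul_comm]
    gcongr
    calc |(P ε).2.2| ≤ hGauge (P ε) ^ 2 := abs_le_hGauge_sq _
      _ ≤ ε ^ 2 := by gcongr; exacts [hGauge_nonneg _, mem_hClosedBall_hOne.1 hε.1]
  have hS :=
    ((isLittleO_sub_fderiv_comp hu hPnorm).sub (isLittleO_sub_fderiv_comp hu hQnorm)).add ht
  refine IsBigO.trans_isLittleO (IsBigO.of_bound' ?_) hS
  filter_upwards [hP, hsmall] with ε ⟨hmem, hmax⟩ hε
  have hCS : ⟪hGrad u 0, hor (P ε)⟫ ≤ ε * ‖hGrad u 0‖ := by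
    rw [mul_comm]
    exact (real_inner_le_norm _ _).trans (by gcongr; exact norm_hor_le_of_mem hmem)
  have hcmp : u (steepestPoint u ε) ≤ u (P ε) := hmax (steepestPoint_mem u hε.1.le)
  have hLP := fderiv_zero_apply u (P ε)
  have hLQ := fderiv_steepestPoint u ε
  rw [Real.norm_of_nonneg (sub_nonneg.2 hCS)]
  exact (le_abs_self _).trans' (by linarith)

end Heisenberg

/-- Direction of maximizers: if `∇_ℍ u(0) ≠ 0` and `P_ε = (x_ε, y_ε, t_ε)` maximizes `u`
over the closed gauge ball `B̄(0,ε)`, then `(x_ε, y_ε)/ε → ∇_ℍ u(0)/|∇_ℍ u(0)|` as `ε → 0⁺`. -/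
theorem maximizer_direction (n : ℕ) (u : Heis n → ℝ) (hu : ContDiffAt ℝ 1 u 0)
    (hgrad : ((fun i => Xd i u 0, fun i => Yd i u 0) : (Fin n → ℝ) × (Fin n → ℝ)) ≠ 0)
    (ε₀ : ℝ) (hε₀ : 0 < ε₀) (Pmax : ℝ → Heis n)
    (hmem : ∀ ε ∈ Set.Ioo (0:ℝ) ε₀, Pmax ε ∈ hClosedBall (hOne : Heis n) ε)
    (hmax : ∀ ε ∈ Set.Ioo (0:ℝ) ε₀, IsMaxOn u (hClosedBall (hOne : Heis n) ε) (Pmax ε)) :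
    ∀ i : Fin n,
      Tendsto (fun ε => (Pmax ε).1 i / ε) (𝓝[>] (0:ℝ)) (𝓝 (Xd i u 0 / hGradNorm u 0)) ∧
      Tendsto (fun ε => (Pmax ε).2.1 i / ε) (𝓝[>] (0:ℝ)) (𝓝 (Yd i u 0 / hGradNorm u 0)) := by
  have hP : ∀ᶠ ε in 𝓝[>] 0,
      Pmax ε ∈ hClosedBall hOne ε ∧ IsMaxOn u (hClosedBall hOne ε) (Pmax ε) := by
    filter_upwards [Ioo_mem_nhdsGT hε₀] with ε hε using ⟨hmem ε hε, hmax ε hε⟩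
  have hz : Tendsto (fun ε => ε⁻¹ • hor (Pmax ε)) (𝓝[>] 0) (𝓝 (‖hGrad u 0‖⁻¹ • hGrad u 0)) :=
    tendsto_smul_of_isLittleO (horVec_ne_zero hgrad) (hP.mono fun ε hε => norm_hor_le_of_mem hε.1)
      (isLittleO_sub_inner_hor_of_isMaxOn (hu.differentiableAt one_ne_zero) hP)
  have hcoord (j : Fin n ⊕ Fin n) :=
    ((EuclideanSpace.proj (𝕜 := ℝ) j).continuous.tendsto _).comp hz
  intro i
  rw [hGradNorm_eq_norm_hGrad]
  constructor
  · simpa [Function.comp_def, hor, hGrad, div_eq_inv_mul] using hcoord (Sum.inl i)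
  · simpa [Function.comp_def, hor, hGrad, div_eq_inv_mul] using hcoord (Sum.inr i)
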